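/- arXiv:1603.02625 — 6 statements merged into one kernel-verified Lean document; each statement's English description precedes it below -/
import Mathlib

section
/- With $p_k$ defined by the recursion $p_k(k+\delta+\theta) = (k-1+\delta)p_{k-1} + \theta r_k$, $p_0 = 0$, and assuming $\sum_k p_k = 1$, $\sum_k k p_k < \infty$, letting $p_{>k} = \sum_{j>k} p_j$ and $r_{>k} = \sum_{j>k} r_j$, the identity $p_{>k} = \frac{k+\delta}{\theta} p_k + r_{>k}$ holds for every $k \ge 1$. -/
open Finset

lemma tail_summable (f : ℕ → ℝ) (hf : Summable f) (k : ℕ) :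
    Summable (fun j => if k < j then f j else 0) := by
  refine (hf.indicator {j | k < j}).congr fun j => ?_
  simp [Set.indicator_apply, Set.mem_setOf_eq]

lemma tail_step (f : ℕ → ℝ) (hf : Summable f) (k : ℕ) :
    (∑' j : ℕ, if k < j then f j else 0)
      = f (k + 1) + ∑' j : ℕ, if k + 1 < j then f j else 0 := by
  have h1 : Summable (fun j : ℕ => if j = k + 1 then f j else 0) := by
    have : HasSum (fun j : ℕ => if j = k + 1 then f (k+1) else 0) (f (k+1)) :=
      hasSum_ite_eq (k+1) (f (k+1))
    refine this.summable.congr fun j => ?_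
    by_cases h : j = k + 1 <;> simp [h]
  have h2 := tail_summable f hf (k+1)
  have hfun : (fun j : ℕ => if k < j then f j else 0)
      = fun j : ℕ => (if j = k + 1 then f j else 0)
        + (if k + 1 < j then f j else 0) := by
    funext j
    rcases lt_trichotomy j (k+1) with h | h | h
    · rw [if_neg (by omega : ¬ k < j), if_neg (by omega : j ≠ k + 1),
        if_neg (by omega : ¬ k + 1 < j)]; ring
    · rw [if_pos (by omega : k < j), if_pos h, if_neg (by omega : ¬ k + 1 < j)]; ring
    · rw [if_pos (by omega : k < j), if_neg (by omega : j ≠ k + 1), if_pos h]; ring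
  rw [hfun, Summable.tsum_add h1 h2]
  congr 1
  have : (fun j : ℕ => if j = k + 1 then f j else 0)
      = fun j : ℕ => if j = k + 1 then f (k+1) else 0 := by
    funext j; by_cases h : j = k + 1 <;> simp [h]
  rw [this, tsum_ite_eq]

lemma tail_zero (f : ℕ → ℝ) (hf : Summable f) :
    (∑' j : ℕ, if 0 < j then f j else 0) = (∑' j : ℕ, f j) - f 0 := by
  have h2 := tail_summable f hf 0
  have hfun : f = fun j : ℕ => (if j = 0 then f j else 0)
      + (if 0 < j then f j else 0) := by
    funext j
    rcases Nat.eq_zero_or_pos j with h | h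
    · simp [h]
    · simp [h, Nat.pos_iff_ne_zero.mp h]
  have h1 : Summable (fun j : ℕ => if j = 0 then f j else 0) := by
    have : HasSum (fun j : ℕ => if j = 0 then f 0 else 0) (f 0) :=
      hasSum_ite_eq 0 (f 0)
    refine this.summable.congr fun j => ?_
    by_cases h : j = 0 <;> simp [h]
  have : (∑' j : ℕ, f j) = f 0 + ∑' j : ℕ, if 0 < j then f j else 0 := by
    conv_lhs => rw [hfun]
    rw [Summable.tsum_add h1 h2]
    congr 1
    have he : (fun j : ℕ => if j = 0 then f j else 0)
        = fun j : ℕ => if j = 0 then f 0 else 0 := by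
      funext j; by_cases h : j = 0 <;> simp [h]
    rw [he, tsum_ite_eq]
  linarith

/-- The tail identity `p_{>k} = ((k+δ)/θ) p_k + r_{>k}` for the limiting degree distribution
of the preferential attachment model with random initial degrees. -/
theorem tail_identity (r : ℕ → ℝ) (p : ℕ → ℝ) (δ μ θ : ℝ)
    (hr_nonneg : ∀ k, 0 ≤ r k) (hr_sum : ∑' k : ℕ, r (k + 1) = 1)
    (hμ : μ = ∑' k : ℕ, ((k + 1 : ℕ) : ℝ) * r (k + 1)) (hμ1 : 1 ≤ μ)
    (hμ_fin : Summable (fun k : ℕ => ((k + 1 : ℕ) : ℝ) * r (k + 1)))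
    (hδ : -1 < δ) (hθ : θ = 2 + δ / μ)
    (hp0 : p 0 = 0)
    (hrec : ∀ k : ℕ, 1 ≤ k →
      p k * ((k : ℝ) + δ + θ) = ((k : ℝ) - 1 + δ) * p (k - 1) + θ * r k)
    (hp_sum : Summable p) (hp_one : ∑' k : ℕ, p k = 1)
    (hp_mean : Summable (fun k : ℕ => (k : ℝ) * p k)) :
    ∀ k : ℕ, 1 ≤ k →
      (∑' j : ℕ, if k < j then p j else 0)
        = (((k : ℝ) + δ) / θ) * p k + (∑' j : ℕ, if k < j then r j else 0) := by
  -- θ > 0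
  have hμ0 : 0 < μ := lt_of_lt_of_le one_pos hμ1
  have hθμ : θ * μ = 2 * μ + δ := by
    rw [hθ]; field_simp
  have hθ0 : 0 < θ := by nlinarith
  -- summability of r
  have hrs1 : Summable (fun k : ℕ => r (k + 1)) := by
    by_contra h
    rw [tsum_eq_zero_of_not_summable h] at hr_sum
    norm_num at hr_sum
  have hrs : Summable r := (summable_nat_add_iff 1).mp hrs1
  -- tail sum of r at 0 equals 1
  have hr0 : (∑' j : ℕ, if 0 < j then r j else 0) = 1 := by
    rw [tail_zero r hrs]
    have : (∑' j : ℕ, r j) = r 0 + ∑' k : ℕ, r (k + 1) :=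
      (Summable.tsum_eq_zero_add hrs)
    rw [this, hr_sum]; ring
  -- tail sum of p at 0 equals 1
  have hp0' : (∑' j : ℕ, if 0 < j then p j else 0) = 1 := by
    rw [tail_zero p hp_sum, hp_one, hp0]; ring
  -- main claim for all k by induction
  have main : ∀ k : ℕ,
      (∑' j : ℕ, if k < j then p j else 0)
        = (((k : ℝ) + δ) / θ) * p k + (∑' j : ℕ, if k < j then r j else 0) := by
    intro k
    induction k with
    | zero => rw [hp0', hp0, hr0]; ring
    | succ n ih =>
      have hstep_p := tail_step p hp_sum n
      have hstep_r := tail_step r hrs n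
      have hr := hrec (n + 1) (by omega)
      have hcast : ((n + 1 : ℕ) : ℝ) = (n : ℝ) + 1 := by push_cast; ring
      rw [hcast] at hr
      simp only [Nat.add_sub_cancel] at hr
      rw [hstep_p, hstep_r] at ih
      have hθne : θ ≠ 0 := ne_of_gt hθ0
      have key : (∑' j : ℕ, if n + 1 < j then p j else 0)
          = (((n : ℝ) + 1 + δ) / θ) * p (n + 1)
            + (∑' j : ℕ, if n + 1 < j then r j else 0) := by
        field_simp at ih ⊢
        nlinarith [ih, hr]
      rw [key]; push_cast; ring_nf
  intro k _
  exact main k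
end

section
/- For $w_{j,n} = \sum_{i=j}^n \frac{1}{i}$, the limit $\frac{1}{n}\sum_{j=1}^n w_{j,n}^2 \to \int_0^1 (\log s)^2\, ds = 2$ holds as $n \to \infty$. -/
/-!
Since `w_{j,n+1} = w_{j,n} + 1/(n+1)`, induction on `n` gives `∑_j w_{j,n} = n` and then
`∑_j w_{j,n}² = 2n - H_n`, so the average is `2 - H_n / n`, and `H_n / n → 0` by Cesàro.
For the integral, `s (log s)² - 2 s log s + 2 s` is a primitive of `(log s)²` that is continuous
on `[0, 1]`; integrability near `0` comes for free because the derivative is nonnegative.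
-/

open Filter Finset Topology Real

/-- The paper's `w_{j,n}`. -/
noncomputable def harmonicTail (j n : ℕ) : ℝ := ∑ i ∈ Icc j n, 1 / (i : ℝ)

lemma harmonicTail_succ_right {j n : ℕ} (hj : j ≤ n + 1) :
    harmonicTail j (n + 1) = harmonicTail j n + 1 / (n + 1) := by
  rw [harmonicTail, sum_Icc_succ_top hj, Nat.cast_succ, harmonicTail]

lemma harmonicTail_eq_zero_of_lt {j n : ℕ} (h : n < j) : harmonicTail j n = 0 := by
  rw [harmonicTail, Icc_eq_empty_of_lt h, sum_empty]

lemma sum_comp_harmonicTail_succ {M : Type*} [AddCommMonoid M] (g : ℝ → M) (n : ℕ) :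
    ∑ j ∈ Icc 1 (n + 1), g (harmonicTail j (n + 1)) =
      ∑ j ∈ Icc 1 n, g (harmonicTail j n + 1 / (n + 1)) + g (1 / (n + 1)) := by
  rw [sum_congr rfl fun j hj => by rw [harmonicTail_succ_right (mem_Icc.mp hj).2],
    sum_Icc_succ_top (Nat.le_add_left 1 n), harmonicTail_eq_zero_of_lt n.lt_succ_self, zero_add]

lemma sum_harmonicTail (n : ℕ) : ∑ j ∈ Icc 1 n, harmonicTail j n = n := by
  induction n with
  | zero => simp
  | succ n ih =>
    rw [sum_comp_harmonicTail_succ (fun x => x), sum_add_distrib]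
    simp only [ih, sum_const, Nat.card_Icc, nsmul_eq_mul]
    push_cast
    field_simp
    ring

lemma sum_harmonicTail_sq (n : ℕ) :
    ∑ j ∈ Icc 1 n, harmonicTail j n ^ 2 = 2 * n - harmonicTail 1 n := by
  induction n with
  | zero => simp [harmonicTail]
  | succ n ih =>
    have expand : ∀ j, (harmonicTail j n + 1 / (n + 1)) ^ 2 =
        harmonicTail j n ^ 2 + 2 / (n + 1) * harmonicTail j n + (1 / (n + 1)) ^ 2 :=
      fun j => by ring
    rw [sum_comp_harmonicTail_succ (· ^ 2), harmonicTail_succ_right le_add_self]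
    simp only [expand, sum_add_distrib, ← mul_sum, ih, sum_harmonicTail, sum_const,
      Nat.card_Icc, nsmul_eq_mul]
    push_cast
    field_simp
    ring

lemma tendsto_harmonicTail_one_div_atTop :
    Tendsto (fun n : ℕ => harmonicTail 1 n / n) atTop (𝓝 0) := by
  refine tendsto_one_div_add_atTop_nhds_zero_nat.cesaro.congr fun n => ?_
  rw [harmonicTail, ← Ico_add_one_right_eq_Icc, sum_Ico_eq_sum_range, inv_mul_eq_div]
  simp [add_comm]

lemma continuousOn_mul_log_sq : ContinuousOn (fun x => x * log x ^ 2) (Set.Ici 0) := by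
  refine ContinuousOn.congr (f := fun x => 4 * (√x * log √x) ^ 2) ?_ fun x hx => ?_
  · exact (continuous_const.mul ((continuous_mul_log.comp continuous_sqrt).pow 2)).continuousOn
  · show x * log x ^ 2 = 4 * (√x * log √x) ^ 2
    rw [log_sqrt hx, mul_pow, sq_sqrt hx]
    ring

lemma hasDerivAt_mul_log_sq {x : ℝ} (hx : x ≠ 0) :
    HasDerivAt (fun x => x * log x ^ 2) (log x ^ 2 + 2 * log x) x := by
  have h := (hasDerivAt_mul_log hx).mul (hasDerivAt_log hx)
  rw [show (fun y => y * log y) * log = fun y => y * log y ^ 2 from funext fun y => by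
    simp only [Pi.mul_apply]; ring] at h
  refine h.congr_deriv ?_
  field_simp
  ring

lemma integral_log_sq_from_zero {b : ℝ} (hb : 0 ≤ b) :
    ∫ s in 0..b, log s ^ 2 = b * log b ^ 2 - 2 * (b * log b) + 2 * b := by
  set F : ℝ → ℝ := fun s => s * log s ^ 2 - 2 * (s * log s) + 2 * s
  have hcont : ContinuousOn F (Set.Icc 0 b) := by
    have := continuousOn_mul_log_sq.mono (Set.Icc_subset_Ici_self : Set.Icc 0 b ⊆ _)
    have := continuous_mul_log.continuousOn (s := Set.Icc 0 b)
    fun_prop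
  have hderiv : ∀ x ∈ Set.Ioo 0 b, HasDerivAt F (log x ^ 2) x := fun x hx =>
    (((hasDerivAt_mul_log_sq hx.1.ne').sub ((hasDerivAt_mul_log hx.1.ne').const_mul 2)).add
      ((hasDerivAt_id x).const_mul 2)).congr_deriv (by ring)
  have hint : IntervalIntegrable (fun s => log s ^ 2) MeasureTheory.volume 0 b := by
    refine intervalIntegral.intervalIntegrable_deriv_of_nonneg (g := F) ?_ ?_ fun x _ => sq_nonneg _
    · rwa [Set.uIcc_of_le hb]
    · rwa [min_eq_left hb, max_eq_right hb]
  rw [intervalIntegral.integral_eq_sub_of_hasDerivAt_of_le hb hcont hderiv hint]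
  simp [F]

/-- For the harmonic tail sums `w_{j,n} = ∑_{i=j}^n 1/i`, the averages of their squares converge:
`(1/n) ∑_{j=1}^n w_{j,n}² → ∫₀¹ (log s)² ds = 2`. -/
theorem harmonic_tail_sq_avg :
    (∫ s in (0:ℝ)..1, (Real.log s) ^ 2) = 2 ∧
    Tendsto (fun n : ℕ => (1 / (n : ℝ)) *
        ∑ j ∈ Finset.Icc 1 n, (∑ i ∈ Finset.Icc j n, (1 / (i : ℝ))) ^ 2)
      atTop (nhds 2) := by
  refine ⟨by norm_num [integral_log_sq_from_zero zero_le_one], ?_⟩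
  have hlim : Tendsto (fun n : ℕ => 2 - harmonicTail 1 n / n) atTop (𝓝 2) := by
    simpa using tendsto_harmonicTail_one_div_atTop.const_sub 2
  refine hlim.congr' ?_
  filter_upwards [eventually_ne_atTop 0] with n hn
  show _ = 1 / (n : ℝ) * ∑ j ∈ Icc 1 n, harmonicTail j n ^ 2
  rw [sum_harmonicTail_sq]
  field_simp
end

section
/- Suppose $(X_n, Y_n, Z_n)$ are random vectors on a common probability space with $Y_n = g_n(Z_n)$ for measurable maps $g_n$, the conditional law of $X_n$ given $Z_n$ converges weakly to $N(0,\sigma^2)$ almost surely, and $Y_n$ converges in distribution to $N(0,\tau^2)$. Then $X_n + Y_n$ converges in distribution to $N(0, \sigma^2 + \tau^2)$. -/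
/-!
Since `Y n` is a function of `Z n`, conditioning on `Z n` factorises the characteristic function:
`E[e^{it(X n + Y n)}] = E[E[e^{itX n} | Z n] · e^{itY n}]`. The conditional factor tends to
`e^{-σ²t²/2}` almost surely, hence in `L¹` since it is bounded, while `E[e^{itY n}] → e^{-τ²t²/2}`.
So the characteristic functions of `X n + Y n` tend to `e^{-(σ²+τ²)t²/2}`, and Lévy's continuity
theorem concludes.
-/

open MeasureTheory ProbabilityTheory Filter Complex BoundedContinuousFunction
open scoped Topology NNReal

lemma charFun_gaussianReal_add (v w : ℝ≥0) (t : ℝ) :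
    charFun (gaussianReal 0 (v + w)) t
      = charFun (gaussianReal 0 v) t * charFun (gaussianReal 0 w) t := by
  rw [charFun_gaussianReal, charFun_gaussianReal, charFun_gaussianReal, ← Complex.exp_add]
  congr 1
  push_cast
  ring

lemma innerProbChar_add {E : Type*} [NormedAddCommGroup E] [InnerProductSpace ℝ E] (t x y : E) :
    innerProbChar t (x + y) = innerProbChar t x * innerProbChar t y := by
  rw [innerProbChar_apply, innerProbChar_apply, innerProbChar_apply, inner_add_left, ofReal_add,
    add_mul, Complex.exp_add]

lemma norm_innerProbChar {E : Type*} [NormedAddCommGroup E] [InnerProductSpace ℝ E] (t x : E) :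
    ‖innerProbChar t x‖ = 1 := by
  rw [innerProbChar_apply, Complex.norm_exp_ofReal_mul_I]

section

variable {Ω : Type*} {mΩ : MeasurableSpace Ω} {μ : Measure Ω} {𝕜 : Type*} [RCLike 𝕜]

lemma tendsto_integral_comp_iff_tendsto_integral_innerProbChar {E : Type*}
    [NormedAddCommGroup E] [InnerProductSpace ℝ E] [FiniteDimensional ℝ E] [MeasurableSpace E]
    [BorelSpace E] [IsProbabilityMeasure μ] {Y : ℕ → Ω → E} (hY : ∀ n, AEMeasurable (Y n) μ)
    (ν : Measure E) [IsProbabilityMeasure ν] :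
    (∀ f : E →ᵇ ℝ, Tendsto (fun n ↦ ∫ ω, f (Y n ω) ∂μ) atTop (𝓝 (∫ x, f x ∂ν))) ↔
      ∀ t, Tendsto (fun n ↦ ∫ ω, innerProbChar t (Y n ω) ∂μ) atTop (𝓝 (charFun ν t)) := by
  let P n : ProbabilityMeasure E := ⟨μ.map (Y n), Measure.isProbabilityMeasure_map (hY n)⟩
  have hP := ProbabilityMeasure.tendsto_iff_forall_integral_tendsto.symm.trans
    (ProbabilityMeasure.tendsto_iff_tendsto_charFun (μ := P) (μ₀ := ⟨ν, ‹_›⟩))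
  simp_rw [P, ProbabilityMeasure.coe_mk] at hP
  simpa only [charFun_eq_integral_innerProbChar,
    integral_map (hY _) (BoundedContinuousFunction.continuous _).aestronglyMeasurable] using hP

lemma ae_tendsto_condExp_comp_of_forall_real {α : Type*} [TopologicalSpace α]
    [MeasurableSpace α] [OpensMeasurableSpace α] [IsFiniteMeasure μ]
    {ν : Measure α} [IsFiniteMeasure ν] {m : ℕ → MeasurableSpace Ω} {X : ℕ → Ω → α}
    (hX : ∀ n, Measurable (X n))
    (h : ∀ᵐ ω ∂μ, ∀ f : α →ᵇ ℝ,
      Tendsto (fun n ↦ μ[fun ω' ↦ f (X n ω') | m n] ω) atTop (𝓝 (∫ x, f x ∂ν)))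
    (f : α →ᵇ 𝕜) :
    ∀ᵐ ω ∂μ, Tendsto (fun n ↦ μ[fun ω' ↦ f (X n ω') | m n] ω) atTop (𝓝 (∫ x, f x ∂ν)) := by
  have hcomm (T : 𝕜 →L[ℝ] ℝ) : ∀ᵐ ω ∂μ, ∀ n,
      T (μ[fun ω' ↦ f (X n ω') | m n] ω) = μ[fun ω' ↦ T (f (X n ω')) | m n] ω :=
    ae_all_iff.2 fun n ↦ T.comp_condExp_comm ((f.integrable _).comp_measurable (hX n))
  filter_upwards [h, hcomm RCLike.reCLM, hcomm RCLike.imCLM] with ω hω hre him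
  have hpart (T : 𝕜 →L[ℝ] ℝ) (hT : ∀ n, T (μ[fun ω' ↦ f (X n ω') | m n] ω)
      = μ[fun ω' ↦ T (f (X n ω')) | m n] ω) :
      Tendsto (fun n ↦ T (μ[fun ω' ↦ f (X n ω') | m n] ω)) atTop (𝓝 (T (∫ x, f x ∂ν))) := by
    simp_rw [hT, ← T.integral_comp_comm (f.integrable ν)]
    exact hω (f.comp T T.lipschitz)
  have hofReal := (RCLike.continuous_ofReal (K := 𝕜)).tendsto
  simpa [Function.comp_def, RCLike.re_add_im] using
    ((hofReal _).comp (hpart _ hre)).add (((hofReal _).comp (hpart _ him)).mul_const RCLike.I)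

lemma tendsto_integral_norm_condExp_sub {E : Type*} [NormedAddCommGroup E] [NormedSpace ℝ E]
    [CompleteSpace E] [IsFiniteMeasure μ] {m : ℕ → MeasurableSpace Ω} {ξ : ℕ → Ω → E} {c : E}
    {C : ℝ} (hξ : ∀ n, ∀ᵐ ω ∂μ, ‖ξ n ω‖ ≤ C)
    (hlim : ∀ᵐ ω ∂μ, Tendsto (fun n ↦ μ[ξ n | m n] ω) atTop (𝓝 c)) :
    Tendsto (fun n ↦ ∫ ω, ‖μ[ξ n | m n] ω - c‖ ∂μ) atTop (𝓝 0) := by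
  have := tendsto_integral_of_dominated_convergence (fun _ ↦ C + ‖c‖)
    (fun n ↦ (integrable_condExp.sub (integrable_const c)).norm.aestronglyMeasurable)
    (integrable_const _)
    (fun n ↦ by
      filter_upwards [ae_bdd_norm_condExp_of_ae_bdd_norm (m := m n) (hξ n)] with ω hω
      rw [norm_norm]
      exact (norm_sub_le _ _).trans (by gcongr))
    (hlim.mono fun ω hω ↦ (hω.sub_const c).norm)
  simpa using this

lemma integral_mul_condExp [IsFiniteMeasure μ] {m : MeasurableSpace Ω} (hm : m ≤ mΩ)
    {W ξ : Ω → 𝕜} {D : ℝ} (hW : StronglyMeasurable[m] W) (hWb : ∀ᵐ ω ∂μ, ‖W ω‖ ≤ D)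
    (hξ : Integrable ξ μ) :
    ∫ ω, W ω * ξ ω ∂μ = ∫ ω, W ω * μ[ξ | m] ω ∂μ := by
  rw [← integral_condExp hm]
  exact integral_congr_ae (condExp_stronglyMeasurable_bilin_of_bound (.mul ℝ 𝕜) hm hW hξ D hWb)

variable [IsFiniteMeasure μ] {m : ℕ → MeasurableSpace Ω} (hm : ∀ n, m n ≤ mΩ)
  {W ξ : ℕ → Ω → 𝕜} {c : 𝕜} {C D : ℝ}
  (hW : ∀ n, StronglyMeasurable[m n] (W n)) (hWb : ∀ n, ∀ᵐ ω ∂μ, ‖W n ω‖ ≤ D)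
  (hξ : ∀ n, Integrable (ξ n) μ) (hξb : ∀ n, ∀ᵐ ω ∂μ, ‖ξ n ω‖ ≤ C)
  (hlim : ∀ᵐ ω ∂μ, Tendsto (fun n ↦ μ[ξ n | m n] ω) atTop (𝓝 c))
include hm hW hWb hξ hξb hlim

lemma tendsto_integral_mul_sub_integral_mul_of_ae_tendsto_condExp :
    Tendsto (fun n ↦ ∫ ω, W n ω * ξ n ω ∂μ - (∫ ω, W n ω ∂μ) * c) atTop (𝓝 0) := by
  have hWm n : AEStronglyMeasurable (W n) μ := ((hW n).mono (hm n)).aestronglyMeasurable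
  have hdiff n : ∫ ω, W n ω * ξ n ω ∂μ - (∫ ω, W n ω ∂μ) * c
      = ∫ ω, W n ω * (μ[ξ n | m n] ω - c) ∂μ := by
    simp_rw [integral_mul_condExp (hm n) (hW n) (hWb n) (hξ n), mul_sub, ← integral_mul_const]
    exact (integral_sub (integrable_condExp.bdd_mul (hWm n) (hWb n))
      ((integrable_const c).bdd_mul (hWm n) (hWb n))).symm
  refine squeeze_zero_norm (fun n ↦ ?_)
    (by simpa using (tendsto_integral_norm_condExp_sub hξb hlim).const_mul D)
  rw [hdiff, ← integral_const_mul]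
  refine norm_integral_le_of_norm_le
    ((integrable_condExp.sub (integrable_const c)).norm.const_mul D) ?_
  filter_upwards [hWb n] with ω hω
  rw [norm_mul]
  gcongr

lemma tendsto_integral_mul_of_ae_tendsto_condExp {a : 𝕜}
    (hWlim : Tendsto (fun n ↦ ∫ ω, W n ω ∂μ) atTop (𝓝 a)) :
    Tendsto (fun n ↦ ∫ ω, ξ n ω * W n ω ∂μ) atTop (𝓝 (c * a)) := by
  have := (tendsto_integral_mul_sub_integral_mul_of_ae_tendsto_condExp hm hW hWb hξ hξb hlim).add
    (hWlim.mul_const c)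
  simp_rw [sub_add_cancel, zero_add] at this
  simpa only [mul_comm] using this

end

/-- If `Y n = g n (Z n)`, the conditional law of `X n` given `Z n` converges weakly to
`N(0, σ²)` almost surely, and `Y n` converges in distribution to `N(0, τ²)`, then
`X n + Y n` converges in distribution to `N(0, σ² + τ²)`. -/
theorem sum_of_two_gaussians {Ω β : Type*} [MeasurableSpace Ω] [MeasurableSpace β]
    (μ : Measure Ω) [IsProbabilityMeasure μ]
    (X : ℕ → Ω → ℝ) (Z : ℕ → Ω → β) (g : ℕ → β → ℝ) (σ τ : NNReal)
    (hX : ∀ n, Measurable (X n)) (hZ : ∀ n, Measurable (Z n)) (hg : ∀ n, Measurable (g n))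
    (hcond : ∀ᵐ ω ∂μ, ∀ f : BoundedContinuousFunction ℝ ℝ,
      Tendsto (fun n => (μ[(fun ω' => f (X n ω')) |
          MeasurableSpace.comap (Z n) inferInstance]) ω)
        atTop (nhds (∫ x, f x ∂(gaussianReal 0 (σ ^ 2)))))
    (hY : ∀ f : BoundedContinuousFunction ℝ ℝ,
      Tendsto (fun n => ∫ ω, f (g n (Z n ω)) ∂μ) atTop
        (nhds (∫ x, f x ∂(gaussianReal 0 (τ ^ 2))))) :
    ∀ f : BoundedContinuousFunction ℝ ℝ,
      Tendsto (fun n => ∫ ω, f (X n ω + g n (Z n ω)) ∂μ) atTop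
        (nhds (∫ x, f x ∂(gaussianReal 0 (σ ^ 2 + τ ^ 2)))) := by
  have hY_meas n : Measurable fun ω ↦ g n (Z n ω) := (hg n).comp (hZ n)
  rw [tendsto_integral_comp_iff_tendsto_integral_innerProbChar
    (Y := fun n ω ↦ X n ω + g n (Z n ω)) fun n ↦ ((hX n).add (hY_meas n)).aemeasurable]
  intro t
  have hXchar := ae_tendsto_condExp_comp_of_forall_real hX hcond (innerProbChar t)
  rw [← charFun_eq_integral_innerProbChar] at hXchar
  have hYchar := (tendsto_integral_comp_iff_tendsto_integral_innerProbChar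
    (fun n ↦ (hY_meas n).aemeasurable) _).1 hY t
  simp_rw [innerProbChar_add, charFun_gaussianReal_add]
  exact tendsto_integral_mul_of_ae_tendsto_condExp (C := 1) (D := 1) (fun n ↦ (hZ n).comap_le)
    (fun n ↦ ((innerProbChar t).continuous.measurable.comp
      ((hg n).comp (comap_measurable (Z n)))).stronglyMeasurable)
    (fun n ↦ ae_of_all _ fun _ ↦ (norm_innerProbChar t _).le)
    (fun n ↦ ((innerProbChar t).integrable _).comp_measurable (hX n))
    (fun n ↦ ae_of_all _ fun _ ↦ (norm_innerProbChar t _).le) hXchar hYchar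
end

section
/- In the setting of Lemma sum-of-two-Gaussians: if for every bounded continuous $f$, $\mathbb{E}[f(X_n)\mid Z_n] \to \int f\, d\Phi_\sigma$ almost surely, and $\mathbb{E}[g(Y_n)] \to \int g\, d\Phi_\tau$ for every bounded continuous $g$ with $Y_n$ measurable with respect to $\sigma(Z_n)$, then for all bounded continuous $f, g$: $\mathbb{E}[f(X_n) g(Y_n)] \to \int f\, d\Phi_\sigma \cdot \int g\, d\Phi_\tau$, i.e.\ $(X_n, Y_n)$ converges in distribution to a pair of independent $N(0,\sigma^2)$ and $N(0,\tau^2)$ variables. -/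
/-!
Write `cₙ = E[f(Xₙ) | Zₙ]`. Since `h(Yₙ)` is `σ(Zₙ)`-measurable, the pull-out property gives
`E[f(Xₙ) h(Yₙ)] = E[cₙ h(Yₙ)]`. By hypothesis `cₙ → ∫ f dΦ_σ` almost surely and `|cₙ| ≤ ‖f‖`, so
dominated convergence kills `E[(cₙ - ∫ f dΦ_σ) h(Yₙ)]`, while `E[h(Yₙ)] → ∫ h dΦ_τ`.
-/

open MeasureTheory ProbabilityTheory Filter Topology

theorem integral_mul_eq_integral_condExp_mul {Ω : Type*} {m m₀ : MeasurableSpace Ω}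
    {μ : Measure Ω} (hm : m ≤ m₀) [SigmaFinite (μ.trim hm)] {f g : Ω → ℝ}
    (hg : StronglyMeasurable[m] g) (hfg : Integrable (f * g) μ) (hf : Integrable f μ) :
    ∫ ω, f ω * g ω ∂μ = ∫ ω, μ[f | m] ω * g ω ∂μ := by
  rw [← integral_condExp hm]
  exact integral_congr_ae (condExp_mul_of_stronglyMeasurable_right hg hfg hf)

theorem tendsto_integral_mul_of_tendsto_ae {Ω ι : Type*} [MeasurableSpace Ω] {μ : Measure Ω}
    [IsFiniteMeasure μ] {l : Filter ι} [l.IsCountablyGenerated] {c Y : ι → Ω → ℝ}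
    {a b B C : ℝ} (hc_meas : ∀ i, AEStronglyMeasurable (c i) μ)
    (hY_meas : ∀ i, AEStronglyMeasurable (Y i) μ) (hc_bdd : ∀ i, ∀ᵐ ω ∂μ, |c i ω| ≤ B)
    (hY_bdd : ∀ i ω, |Y i ω| ≤ C) (hc : ∀ᵐ ω ∂μ, Tendsto (fun i => c i ω) l (𝓝 a))
    (hY : Tendsto (fun i => ∫ ω, Y i ω ∂μ) l (𝓝 b)) :
    Tendsto (fun i => ∫ ω, c i ω * Y i ω ∂μ) l (𝓝 (a * b)) := by
  have hY_int i : Integrable (Y i) μ := .of_bound (hY_meas i) C (.of_forall (hY_bdd i))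
  have h_dev i : ∀ᵐ ω ∂μ, |c i ω - a| ≤ B + |a| :=
    (hc_bdd i).mono fun ω hω => (abs_sub _ _).trans (by linarith)
  have hcY_int i : Integrable (fun ω => (c i ω - a) * Y i ω) μ :=
    (hY_int i).bdd_mul ((hc_meas i).sub aestronglyMeasurable_const) (c := B + |a|) (h_dev i)
  have h_split i : ∫ ω, c i ω * Y i ω ∂μ = ∫ ω, (c i ω - a) * Y i ω ∂μ + a * ∫ ω, Y i ω ∂μ := by
    rw [← integral_const_mul, ← integral_add (hcY_int i) ((hY_int i).const_mul a)]
    congr with ω; ring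
  have h_error : Tendsto (fun i => ∫ ω, (c i ω - a) * Y i ω ∂μ) l (𝓝 0) := by
    rw [← integral_zero Ω ℝ]
    refine tendsto_integral_filter_of_dominated_convergence (fun _ => (B + |a|) * C)
      (.of_forall fun i => (hcY_int i).aestronglyMeasurable) (.of_forall fun i => ?_)
      (integrable_const _) ?_
    · filter_upwards [h_dev i] with ω hω
      rw [norm_mul, Real.norm_eq_abs, Real.norm_eq_abs]
      exact mul_le_mul hω (hY_bdd i ω) (abs_nonneg _) ((abs_nonneg _).trans hω)
    · filter_upwards [hc] with ω hω
      refine (tendsto_sub_nhds_zero_iff.mpr hω).zero_mul_isBoundedUnder_le ⟨C, ?_⟩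
      exact eventually_map.mpr (.of_forall fun i => hY_bdd i ω)
  simp_rw [h_split]
  simpa using h_error.add (hY.const_mul a)

/-- If `Y n = g n (Z n)`, the conditional law of `X n` given `Z n` converges weakly to
`N(0, σ²)` almost surely, and `Y n` converges in distribution to `N(0, τ²)`, then for all
bounded continuous `f, g`: `E[f(Xₙ) g(Yₙ)] → ∫ f dΦ_σ ⬝ ∫ g dΦ_τ`, i.e. `(Xₙ, Yₙ)` converges in
distribution to a pair of independent `N(0,σ²)` and `N(0,τ²)` variables. -/
theorem asymptotic_independence_of_conditional_gaussian {Ω β : Type*} [MeasurableSpace Ω]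
    [MeasurableSpace β] (μ : Measure Ω) [IsProbabilityMeasure μ]
    (X : ℕ → Ω → ℝ) (Z : ℕ → Ω → β) (g : ℕ → β → ℝ) (σ τ : NNReal)
    (hX : ∀ n, Measurable (X n)) (hZ : ∀ n, Measurable (Z n)) (hg : ∀ n, Measurable (g n))
    (hcond : ∀ᵐ ω ∂μ, ∀ f : BoundedContinuousFunction ℝ ℝ,
      Tendsto (fun n => (μ[(fun ω' => f (X n ω')) |
          MeasurableSpace.comap (Z n) inferInstance]) ω)
        atTop (nhds (∫ x, f x ∂(gaussianReal 0 (σ ^ 2)))))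
    (hY : ∀ f : BoundedContinuousFunction ℝ ℝ,
      Tendsto (fun n => ∫ ω, f (g n (Z n ω)) ∂μ) atTop
        (nhds (∫ x, f x ∂(gaussianReal 0 (τ ^ 2))))) :
    ∀ f h : BoundedContinuousFunction ℝ ℝ,
      Tendsto (fun n => ∫ ω, f (X n ω) * h (g n (Z n ω)) ∂μ) atTop
        (nhds ((∫ x, f x ∂(gaussianReal 0 (σ ^ 2))) *
               (∫ x, h x ∂(gaussianReal 0 (τ ^ 2))))) := by
  intro f h
  have hm n : MeasurableSpace.comap (Z n) inferInstance ≤ ‹MeasurableSpace Ω› := (hZ n).comap_le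
  have abs_le_norm (k : BoundedContinuousFunction ℝ ℝ) x : |k x| ≤ ‖k‖ := k.norm_coe_le_norm x
  have hfX_int n : Integrable (fun ω => f (X n ω)) μ :=
    .of_bound (f.continuous.measurable.comp (hX n)).aestronglyMeasurable ‖f‖
      (.of_forall fun ω => abs_le_norm f _)
  have hhY_meas n : StronglyMeasurable[MeasurableSpace.comap (Z n) inferInstance]
      (fun ω => h (g n (Z n ω))) :=
    (h.continuous.measurable.comp ((hg n).comp (comap_measurable (Z n)))).stronglyMeasurable
  have h_tower n : ∫ ω, f (X n ω) * h (g n (Z n ω)) ∂μ = ∫ ω,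
      (μ[(fun ω' => f (X n ω')) | MeasurableSpace.comap (Z n) inferInstance]) ω
        * h (g n (Z n ω)) ∂μ :=
    integral_mul_eq_integral_condExp_mul (hm n) (hhY_meas n)
      ((hfX_int n).mul_bdd ((hhY_meas n).mono (hm n)).aestronglyMeasurable
        (.of_forall fun ω => abs_le_norm h _)) (hfX_int n)
  simp_rw [h_tower]
  exact tendsto_integral_mul_of_tendsto_ae
    (fun n => (stronglyMeasurable_condExp.mono (hm n)).aestronglyMeasurable)
    (fun n => ((hhY_meas n).mono (hm n)).aestronglyMeasurable)
    (fun n => ae_bdd_abs_condExp_of_ae_bdd_abs (.of_forall fun ω => abs_le_norm f _))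
    (fun n ω => abs_le_norm h _) (hcond.mono fun ω hω => hω f) (hY h)
end

section
/- Let $m$ be a positive integer, $\delta > -1$, $\theta = 2 + \delta/m$. Define $p_k = 0$ for $k < m$ and $p_k = \frac{\theta\, \Gamma(k+\delta)\Gamma(m+\delta+\theta)}{\Gamma(m+\delta)\Gamma(k+1+\delta+\theta)}$ for $k \ge m$. Then $(p_k)_{k\ge 1}$ satisfies the recursion $p_k = \frac{k-1+\delta}{\theta} p_{k-1} - \frac{k+\delta}{\theta} p_k + 1_{\{k=m\}}$ for all $k \ge 1$, and $\sum_{k\ge m} p_k = 1$. -/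
open Finset Real

/-- For fixed initial degree `m`, the explicit Gamma-function formula
`p_k = θ Γ(k+δ) Γ(m+δ+θ) / (Γ(m+δ) Γ(k+1+δ+θ))` for `k ≥ m` (and `p_k = 0` for `k < m`)
satisfies the degree recursion with degenerate initial-degree distribution `r_m = 1`,
and defines a probability distribution. -/
theorem fixed_initial_degree_distribution (m : ℕ) (hm : 1 ≤ m) (δ θ : ℝ)
    (hδ : -1 < δ) (hθ : θ = 2 + δ / m) (p : ℕ → ℝ)
    (hp : ∀ k : ℕ, p k = if k < m then 0 else
      θ * Real.Gamma ((k : ℝ) + δ) * Real.Gamma ((m : ℝ) + δ + θ) /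
        (Real.Gamma ((m : ℝ) + δ) * Real.Gamma ((k : ℝ) + 1 + δ + θ))) :
    (∀ k : ℕ, 1 ≤ k →
      p k = (((k : ℝ) - 1 + δ) / θ) * p (k - 1) - (((k : ℝ) + δ) / θ) * p k
        + (if k = m then 1 else 0)) ∧
    ∑' k : ℕ, p k = 1 := by
  have hm1 : (1 : ℝ) ≤ (m : ℝ) := by exact_mod_cast hm
  have hm0 : (0 : ℝ) < (m : ℝ) := by linarith
  have hδm : -1 < δ / m := by
    rw [lt_div_iff₀ hm0]; nlinarith
  have hθ1 : 1 < θ := by rw [hθ]; linarith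
  have hθ0 : 0 < θ := by linarith
  -- positivity of Gamma arguments
  have hmδ : (0 : ℝ) < (m : ℝ) + δ := by linarith
  have hmδθ : (0 : ℝ) < (m : ℝ) + δ + θ := by linarith
  have hGm : (0 : ℝ) < Real.Gamma ((m : ℝ) + δ) := Real.Gamma_pos_of_pos hmδ
  have hGmθ : (0 : ℝ) < Real.Gamma ((m : ℝ) + δ + θ) := Real.Gamma_pos_of_pos hmδθ
  have hkδ : ∀ k : ℕ, m ≤ k → (0 : ℝ) < (k : ℝ) + δ := by
    intro k hk
    have : (m : ℝ) ≤ (k : ℝ) := by exact_mod_cast hk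
    linarith
  set C : ℝ := Real.Gamma ((m : ℝ) + δ + θ) / Real.Gamma ((m : ℝ) + δ) with hC
  set b : ℕ → ℝ := fun k => Real.Gamma ((k : ℝ) + δ) / Real.Gamma ((k : ℝ) + δ + θ) with hb
  -- key telescoping identity
  have hA : ∀ k : ℕ, m ≤ k → p k = C * (b k - b (k + 1)) := by
    intro k hk
    have hk0 : (0 : ℝ) < (k : ℝ) + δ := hkδ k hk
    have hk1 : (0 : ℝ) < (k : ℝ) + δ + θ := by linarith
    have hGk : (0 : ℝ) < Real.Gamma ((k : ℝ) + δ) := Real.Gamma_pos_of_pos hk0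
    have hGkθ : (0 : ℝ) < Real.Gamma ((k : ℝ) + δ + θ) := Real.Gamma_pos_of_pos hk1
    have g1 : Real.Gamma ((k : ℝ) + 1 + δ) = ((k : ℝ) + δ) * Real.Gamma ((k : ℝ) + δ) := by
      rw [show (k : ℝ) + 1 + δ = ((k : ℝ) + δ) + 1 by ring, Real.Gamma_add_one hk0.ne']
    have g2 : Real.Gamma ((k : ℝ) + 1 + δ + θ)
        = ((k : ℝ) + δ + θ) * Real.Gamma ((k : ℝ) + δ + θ) := by
      rw [show (k : ℝ) + 1 + δ + θ = ((k : ℝ) + δ + θ) + 1 by ring, Real.Gamma_add_one hk1.ne']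
    rw [hp k, if_neg (not_lt.mpr hk)]
    simp only [hC, hb]
    push_cast
    rw [g1, g2]
    field_simp
    ring
  refine ⟨?_, ?_⟩
  · -- the recursion
    intro k hk
    rcases lt_trichotomy k m with h | h | h
    · have h1 : k - 1 < m := lt_of_le_of_lt (Nat.sub_le k 1) h
      rw [hp k, hp (k - 1), if_pos h, if_pos h1, if_neg (Nat.ne_of_lt h)]
      ring
    · subst h
      have h1 : k - 1 < k := Nat.sub_lt (by omega) one_pos
      rw [hp k, hp (k - 1), if_pos h1, if_neg (lt_irrefl k), if_pos rfl]
      have hk1 : (0 : ℝ) < (k : ℝ) + δ + θ := hmδθ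
      have g2 : Real.Gamma ((k : ℝ) + 1 + δ + θ)
          = ((k : ℝ) + δ + θ) * Real.Gamma ((k : ℝ) + δ + θ) := by
        rw [show (k : ℝ) + 1 + δ + θ = ((k : ℝ) + δ + θ) + 1 by ring, Real.Gamma_add_one hk1.ne']
      rw [g2]
      field_simp
      ring
    · have hk1 : m ≤ k - 1 := Nat.le_sub_one_of_lt h
      have hk' : m ≤ k := le_of_lt h
      rw [hp k, hp (k - 1), if_neg (not_lt.mpr hk'), if_neg (not_lt.mpr hk1),
        if_neg (Nat.ne_of_gt h), Nat.cast_sub hk, Nat.cast_one]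
      have hx0 : (0 : ℝ) < (k : ℝ) - 1 + δ := by
        have : (m : ℝ) + 1 ≤ (k : ℝ) := by exact_mod_cast h
        linarith
      have hx1 : (0 : ℝ) < (k : ℝ) + δ + θ := by linarith
      have hGx : (0 : ℝ) < Real.Gamma ((k : ℝ) - 1 + δ) := Real.Gamma_pos_of_pos hx0
      have hGxθ : (0 : ℝ) < Real.Gamma ((k : ℝ) + δ + θ) := Real.Gamma_pos_of_pos hx1
      have g1 : Real.Gamma ((k : ℝ) + δ) = ((k : ℝ) - 1 + δ) * Real.Gamma ((k : ℝ) - 1 + δ) := by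
        rw [show (k : ℝ) + δ = ((k : ℝ) - 1 + δ) + 1 by ring, Real.Gamma_add_one hx0.ne']
      have g2 : Real.Gamma ((k : ℝ) + 1 + δ + θ)
          = ((k : ℝ) + δ + θ) * Real.Gamma ((k : ℝ) + δ + θ) := by
        rw [show (k : ℝ) + 1 + δ + θ = ((k : ℝ) + δ + θ) + 1 by ring, Real.Gamma_add_one hx1.ne']
      rw [g1, g2, show (k : ℝ) - 1 + 1 + δ + θ = (k : ℝ) + δ + θ by ring]
      field_simp
      ring
  · -- the sum
    have hnn : ∀ k, 0 ≤ p k := by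
      intro k
      rw [hp k]
      split
      · exact le_refl 0
      · next hk =>
        have hk' : m ≤ k := not_lt.mp hk
        have hk0 := hkδ k hk'
        have hGk := Real.Gamma_pos_of_pos hk0
        have hGk1 := Real.Gamma_pos_of_pos (show (0:ℝ) < (k : ℝ) + 1 + δ + θ by linarith)
        exact le_of_lt (div_pos (mul_pos (mul_pos hθ0 hGk) hGmθ) (mul_pos hGm hGk1))
    have hCb : C * b m = 1 := by
      simp only [hC, hb]
      field_simp
    have hpart : ∀ N, m ≤ N → ∑ k ∈ range N, p k = 1 - C * b N := by
      intro N hN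
      induction N, hN using Nat.le_induction with
      | base =>
        rw [Finset.sum_eq_zero fun k hk => by rw [hp k, if_pos (mem_range.mp hk)], hCb]
        ring
      | succ N hN ih =>
        rw [Finset.sum_range_succ, ih, hA N hN]
        ring
    have hb0 : Filter.Tendsto (fun N : ℕ => C * b N) Filter.atTop (nhds 0) := by
      have hCpos : 0 < C := div_pos hGmθ hGm
      have hev2 : ∀ᶠ N : ℕ in Filter.atTop, (2 : ℝ) ≤ (N : ℝ) + δ := by
        filter_upwards [(tendsto_natCast_atTop_atTop (R := ℝ)).eventually_ge_atTop (2 - δ)]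
          with N hN
        linarith
      apply squeeze_zero' (g := fun N : ℕ => C * (1 / ((N : ℝ) + (δ + θ - 1))))
      · filter_upwards [Filter.eventually_ge_atTop m] with N hN
        have h0 := hkδ N hN
        exact mul_nonneg hCpos.le
          (div_nonneg (Real.Gamma_pos_of_pos h0).le
            (Real.Gamma_pos_of_pos (by linarith : (0:ℝ) < (N : ℝ) + δ + θ)).le)
      · filter_upwards [hev2] with N hN2
        have hx : (0 : ℝ) < (N : ℝ) + δ := by linarith
        have hx1 : (0 : ℝ) < (N : ℝ) + δ + θ - 1 := by linarith
        have hGx : (0 : ℝ) < Real.Gamma ((N : ℝ) + δ) := Real.Gamma_pos_of_pos hx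
        have hGx1 : (0 : ℝ) < Real.Gamma ((N : ℝ) + δ + θ) := Real.Gamma_pos_of_pos (by linarith)
        have hmono : Real.Gamma ((N : ℝ) + δ) ≤ Real.Gamma ((N : ℝ) + δ + θ - 1) :=
          Real.Gamma_strictMonoOn_Ici.monotoneOn (Set.mem_Ici.mpr hN2)
            (Set.mem_Ici.mpr (by linarith)) (by linarith)
        have grec : Real.Gamma ((N : ℝ) + δ + θ)
            = ((N : ℝ) + δ + θ - 1) * Real.Gamma ((N : ℝ) + δ + θ - 1) := by
          have h := Real.Gamma_add_one hx1.ne'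
          rw [show ((N : ℝ) + δ + θ - 1) + 1 = (N : ℝ) + δ + θ by ring] at h
          exact h
        have hbN : b N ≤ 1 / ((N : ℝ) + (δ + θ - 1)) := by
          simp only [hb]
          rw [div_le_div_iff₀ hGx1 (by linarith), grec]
          nlinarith
        exact mul_le_mul_of_nonneg_left hbN hCpos.le
      · have hden : Filter.Tendsto (fun N : ℕ => (N : ℝ) + (δ + θ - 1)) Filter.atTop
            Filter.atTop :=
          Filter.tendsto_atTop_add_const_right _ _ (tendsto_natCast_atTop_atTop (R := ℝ))
        have := (Filter.Tendsto.const_mul C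
          (Filter.Tendsto.div_atTop (tendsto_const_nhds (x := (1:ℝ))) hden))
        simpa using this
    have htend : Filter.Tendsto (fun N : ℕ => ∑ k ∈ range N, p k) Filter.atTop (nhds 1) := by
      have h1 : Filter.Tendsto (fun N : ℕ => 1 - C * b N) Filter.atTop (nhds 1) := by
        have h2 : Filter.Tendsto (fun N : ℕ => 1 - C * b N) Filter.atTop (nhds (1 - 0)) :=
          Filter.Tendsto.sub tendsto_const_nhds hb0
        simpa using h2
      refine h1.congr' ?_
      filter_upwards [Filter.eventually_ge_atTop m] with N hN
      exact (hpart N hN).symm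
    exact ((hasSum_iff_tendsto_nat_of_nonneg hnn 1).mpr htend).tsum_eq
end

section
/- Let $X_1, X_2, \dots$ be i.i.d. centered random variables with unit variance and finite variance, and define $\overline{X}_i = \frac1i \sum_{j=1}^i X_j$. Then the variance of $\frac{1}{\sqrt n}\sum_{i=1}^n \overline{X}_i$ equals $\frac1n \sum_{j=1}^n w_{j,n}^2$ with $w_{j,n} = \sum_{i=j}^n 1/i$, and this converges to $2$ as $n \to \infty$. -/
/-!
Exchanging the order of summation writes `∑_{i ≤ n} X̄_i` as `∑_{j ≤ n} w_{j,n} X_j`, so by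
independence its variance is `∑_j w_{j,n}²`. Since `w_{j,n+1} = w_{j,n} + 1/(n+1)` and
`∑_j w_{j,n} = n`, induction gives `∑_j w_{j,n}² = 2n - H_n`, and `H_n / n → 0`.
-/

open MeasureTheory ProbabilityTheory Filter Finset

theorem sum_Icc_mul_sum_Icc_comm {R : Type*} [CommSemiring R] (a x : ℕ → R) (n : ℕ) :
    ∑ i ∈ Icc 1 n, a i * ∑ j ∈ Icc 1 i, x j = ∑ j ∈ Icc 1 n, (∑ i ∈ Icc j n, a i) * x j := by
  simp only [mul_sum, sum_mul]
  exact sum_comm' fun i j => by simp only [mem_Icc]; omega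

theorem sum_sum_Icc_one_div (n : ℕ) : ∑ j ∈ Icc 1 n, ∑ i ∈ Icc j n, (1 / (i : ℝ)) = n := by
  have h := sum_Icc_mul_sum_Icc_comm (fun i => 1 / (i : ℝ)) (fun _ => 1) n
  simp only [mul_one, sum_const, Nat.card_Icc, Nat.add_sub_cancel, nsmul_eq_mul] at h
  rw [← h, sum_congr rfl fun i hi => one_div_mul_cancel (Nat.cast_ne_zero.2 (by simp at hi; omega))]
  simp

theorem sum_sq_sum_Icc_one_div (n : ℕ) :
    ∑ j ∈ Icc 1 n, (∑ i ∈ Icc j n, (1 / (i : ℝ))) ^ 2 = 2 * n - ∑ i ∈ Icc 1 n, (1 / (i : ℝ)) := by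
  induction n with
  | zero => simp
  | succ n ih =>
    have tail_succ : ∀ j ∈ Icc 1 n,
        ∑ i ∈ Icc j (n + 1), (1 / (i : ℝ)) = ∑ i ∈ Icc j n, (1 / (i : ℝ)) + 1 / (n + 1) := by
      intro j hj
      rw [sum_Icc_succ_top (by simp at hj; omega)]
      push_cast
      rfl
    rw [sum_Icc_succ_top (a := 1) (by omega), sum_Icc_succ_top (a := 1) (by omega),
      sum_congr rfl fun j hj => by rw [tail_succ j hj]]
    simp only [add_sq, sum_add_distrib, ← sum_mul, ← mul_sum, ih, sum_sum_Icc_one_div, sum_const,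
      Nat.card_Icc, Icc_self, sum_singleton]
    push_cast [nsmul_eq_mul]
    field_simp
    ring

theorem tendsto_inv_mul_sum_Icc_one_div_nhds_zero :
    Tendsto (fun n : ℕ => (n : ℝ)⁻¹ * ∑ i ∈ Icc 1 n, (1 / (i : ℝ))) atTop (nhds 0) := by
  have h := (tendsto_one_div_add_atTop_nhds_zero_nat (𝕜 := ℝ)).cesaro
  refine h.congr fun n => ?_
  rw [← Ico_add_one_right_eq_Icc, sum_Ico_eq_sum_range]
  simp [add_comm]

theorem variance_sum_smul_of_pairwise_indepFun {Ω ι : Type*} [MeasurableSpace Ω] {μ : Measure Ω}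
    {X : ι → Ω → ℝ} (hindep : Pairwise fun i j => X i ⟂ᵢ[μ] X j) (hL2 : ∀ i, MemLp (X i) 2 μ)
    (s : Finset ι) (c : ι → ℝ) :
    variance (∑ i ∈ s, c i • X i) μ = ∑ i ∈ s, c i ^ 2 * variance (X i) μ := by
  rw [IndepFun.variance_sum (fun i _ => (hL2 i).const_smul (c i))
    fun i _ j _ hij => (hindep hij).comp (measurable_const_mul (c i)) (measurable_const_mul (c j))]
  simp only [variance_smul]

theorem variance_of_cesaro_sample_means_general {Ω : Type*} [MeasurableSpace Ω] (μ : Measure Ω)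
    (X : ℕ → Ω → ℝ)
    (hindep : iIndepFun X μ)
    (hident : ∀ i, Measure.map (X i) μ = Measure.map (X 0) μ)
    (hL2 : ∀ i, MemLp (X i) 2 μ)
    (hvar : variance (X 0) μ = 1) :
    (∀ n : ℕ, 1 ≤ n →
      variance (fun ω => (1 / Real.sqrt n) * ∑ i ∈ Finset.Icc 1 n,
          (1 / (i : ℝ)) * ∑ j ∈ Finset.Icc 1 i, X j ω) μ
        = (1 / (n : ℝ)) * ∑ j ∈ Finset.Icc 1 n,
            (∑ i ∈ Finset.Icc j n, (1 / (i : ℝ))) ^ 2) ∧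
    Tendsto (fun n : ℕ => (1 / (n : ℝ)) * ∑ j ∈ Finset.Icc 1 n,
        (∑ i ∈ Finset.Icc j n, (1 / (i : ℝ))) ^ 2) atTop (nhds 2) := by
  have hvar_one : ∀ j, variance (X j) μ = 1 := fun j => by
    rw [← hvar, IdentDistrib.variance_eq
      ⟨(hL2 j).aestronglyMeasurable.aemeasurable, (hL2 0).aestronglyMeasurable.aemeasurable,
        hident j⟩]
  refine ⟨fun n _ => ?_, ?_⟩
  · have hsum : (fun ω => (1 / Real.sqrt n) * ∑ i ∈ Icc 1 n,
          (1 / (i : ℝ)) * ∑ j ∈ Icc 1 i, X j ω) =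
        (1 / Real.sqrt n) • ∑ j ∈ Icc 1 n, (∑ i ∈ Icc j n, (1 / (i : ℝ))) • X j := by
      ext ω
      simp only [Pi.smul_apply, Finset.sum_apply, smul_eq_mul, sum_Icc_mul_sum_Icc_comm]
    rw [hsum, variance_smul, variance_sum_smul_of_pairwise_indepFun
      (fun i j hij => hindep.indepFun hij) hL2]
    simp only [hvar_one, mul_one, div_pow, one_pow, Real.sq_sqrt (Nat.cast_nonneg n)]
  · have h := (tendsto_const_nhds (x := (2 : ℝ))).sub tendsto_inv_mul_sum_Icc_one_div_nhds_zero
    rw [sub_zero] at h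
    refine h.congr' ?_
    filter_upwards [eventually_ge_atTop 1] with n hn
    have : (n : ℝ) ≠ 0 := Nat.cast_ne_zero.2 (by omega)
    rw [sum_sq_sum_Icc_one_div]
    field_simp

/-- For i.i.d. centered unit-variance random variables, the variance of
`(1/√n) ∑_{i=1}^n X̄_i` equals `(1/n) ∑_{j=1}^n w_{j,n}²` where `w_{j,n} = ∑_{i=j}^n 1/i`,
and this converges to `2` as `n → ∞`. -/
theorem variance_of_cesaro_sample_means {Ω : Type*} [MeasurableSpace Ω] (μ : Measure Ω)
    [IsProbabilityMeasure μ] (X : ℕ → Ω → ℝ)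
    (hmeas : ∀ i, Measurable (X i))
    (hindep : iIndepFun X μ)
    (hident : ∀ i, Measure.map (X i) μ = Measure.map (X 0) μ)
    (hL2 : ∀ i, MemLp (X i) 2 μ)
    (hmean : μ[X 0] = 0) (hvar : variance (X 0) μ = 1) :
    (∀ n : ℕ, 1 ≤ n →
      variance (fun ω => (1 / Real.sqrt n) * ∑ i ∈ Finset.Icc 1 n,
          (1 / (i : ℝ)) * ∑ j ∈ Finset.Icc 1 i, X j ω) μ
        = (1 / (n : ℝ)) * ∑ j ∈ Finset.Icc 1 n,
            (∑ i ∈ Finset.Icc j n, (1 / (i : ℝ))) ^ 2) ∧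
    Tendsto (fun n : ℕ => (1 / (n : ℝ)) * ∑ j ∈ Finset.Icc 1 n,
        (∑ i ∈ Finset.Icc j n, (1 / (i : ℝ))) ^ 2) atTop (nhds 2) :=
  variance_of_cesaro_sample_means_general μ X hindep hident hL2 hvar
end
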